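/- (Pointwise decomposition of R[P], two-dimensional case) Let n > 2 be a real number, α > 0, and let P ∈ C³((0,∞) × ℝ) be a function of (s,θ). In terms of partial derivatives P_s, P_θ, P_{ss}, P_{sθ}, P_{θθ}, define |DP|² := α² P_s² + P_θ²/s², the pairing DP·DQ := α² P_s Q_s + P_θ Q_θ/s², the operator L Q := α²(Q_{ss} + (n-1) Q_s/s) + Q_{θθ}/s², and R[P] := ½ L(|DP|²) − α² P_s ∂_s(L P) − (P_θ/s²) ∂_θ(L P) − (1/n)(L P)². Then the following identity holds pointwise on (0,∞) × ℝ: R[P] = α⁴(1 − 1/n) [ P_{ss} − P_s/s − P_{θθ}/(α²(n-1)s²) ]² + (2α²/s²) [ P_{sθ} − P_θ/s ]² + s^{-4} [ ((n-2)/(n-1)) P_{θθ}² − (n-2) α² P_θ² ]. -/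

import Mathlib

open Real Set

noncomputable section

/-- Partial derivative in the first (radial) variable `s`. -/
def pds (f : ℝ × ℝ → ℝ) (z : ℝ × ℝ) : ℝ := deriv (fun s => f (s, z.2)) z.1

/-- Partial derivative in the second (angular) variable `θ`. -/
def pdt (f : ℝ × ℝ → ℝ) (z : ℝ × ℝ) : ℝ := deriv (fun θ => f (z.1, θ)) z.2

/-- `|DP|² = α² P_s² + P_θ²/s²`. -/
def DP2 (α : ℝ) (P : ℝ × ℝ → ℝ) (z : ℝ × ℝ) : ℝ :=
  α^2 * (pds P z)^2 + (pdt P z)^2 / z.1^2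

/-- The operator `L Q = α²(Q_{ss} + (n-1)Q_s/s) + Q_{θθ}/s²`. -/
def L2 (α n : ℝ) (Q : ℝ × ℝ → ℝ) (z : ℝ × ℝ) : ℝ :=
  α^2 * (pds (pds Q) z + (n - 1) * pds Q z / z.1) + pdt (pdt Q) z / z.1^2

/-- `R[P] = ½ L(|DP|²) − α² P_s ∂_s(LP) − (P_θ/s²) ∂_θ(LP) − (1/n)(LP)²`. -/
def R2 (α n : ℝ) (P : ℝ × ℝ → ℝ) (z : ℝ × ℝ) : ℝ :=
  (1/2) * L2 α n (DP2 α P) z - α^2 * pds P z * pds (L2 α n P) z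
    - (pdt P z / z.1^2) * pdt (L2 α n P) z - (1/n) * (L2 α n P z)^2

/-! The identity is a direct computation. Expanding `L(|DP|²)`, `∂_s(LP)` and `∂_θ(LP)` by the
product and quotient rules, every third-order derivative of `P` cancels once mixed partials are
identified (Schwarz's theorem, applied to `P` and to its first partials). What remains is a
quadratic form in `P_s, P_θ, P_ss, P_sθ, P_θθ` with coefficients rational in `s, α, n`, and
completing squares in it gives the stated decomposition. -/

open Filter Topology

section PartialDerivatives

variable {g h : ℝ × ℝ → ℝ} {z : ℝ × ℝ}

theorem hasDerivAt_fderiv_apply_fst (hg : DifferentiableAt ℝ g z) :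
    HasDerivAt (fun s => g (s, z.2)) (fderiv ℝ g z (1, 0)) z.1 :=
  hg.hasFDerivAt.comp_hasDerivAt z.1 ((hasDerivAt_id _).prodMk (hasDerivAt_const _ _))

theorem hasDerivAt_fderiv_apply_snd (hg : DifferentiableAt ℝ g z) :
    HasDerivAt (fun θ => g (z.1, θ)) (fderiv ℝ g z (0, 1)) z.2 :=
  hg.hasFDerivAt.comp_hasDerivAt z.2 ((hasDerivAt_const _ _).prodMk (hasDerivAt_id _))

theorem pds_eq_fderiv (hg : DifferentiableAt ℝ g z) : pds g z = fderiv ℝ g z (1, 0) :=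
  (hasDerivAt_fderiv_apply_fst hg).deriv

theorem pdt_eq_fderiv (hg : DifferentiableAt ℝ g z) : pdt g z = fderiv ℝ g z (0, 1) :=
  (hasDerivAt_fderiv_apply_snd hg).deriv

theorem hasDerivAt_pds (hg : DifferentiableAt ℝ g z) :
    HasDerivAt (fun s => g (s, z.2)) (pds g z) z.1 :=
  pds_eq_fderiv hg ▸ hasDerivAt_fderiv_apply_fst hg

theorem hasDerivAt_pdt (hg : DifferentiableAt ℝ g z) :
    HasDerivAt (fun θ => g (z.1, θ)) (pdt g z) z.2 :=
  pdt_eq_fderiv hg ▸ hasDerivAt_fderiv_apply_snd hg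

theorem Filter.EventuallyEq.pds_eq (hgh : g =ᶠ[𝓝 z] h) : pds g z = pds h z :=
  Filter.EventuallyEq.deriv_eq <|
    (continuous_id.prodMk continuous_const).continuousAt.preimage_mem_nhds hgh

theorem Filter.EventuallyEq.pdt_eq (hgh : g =ᶠ[𝓝 z] h) : pdt g z = pdt h z :=
  Filter.EventuallyEq.deriv_eq <|
    (continuous_const.prodMk continuous_id).continuousAt.preimage_mem_nhds hgh

theorem pds_eventuallyEq_fderiv (hg : ∀ᶠ w in 𝓝 z, DifferentiableAt ℝ g w) :
    pds g =ᶠ[𝓝 z] fun w => fderiv ℝ g w (1, 0) :=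
  hg.mono fun _ hw => pds_eq_fderiv hw

theorem pdt_eventuallyEq_fderiv (hg : ∀ᶠ w in 𝓝 z, DifferentiableAt ℝ g w) :
    pdt g =ᶠ[𝓝 z] fun w => fderiv ℝ g w (0, 1) :=
  hg.mono fun _ hw => pdt_eq_fderiv hw

theorem ContDiffAt.eventually_differentiableAt {n : WithTop ℕ∞} (hg : ContDiffAt ℝ n g z)
    (hn : 1 ≤ n) : ∀ᶠ w in 𝓝 z, DifferentiableAt ℝ g w :=
  ((hg.of_le hn).eventually (by simp)).mono fun _ hw => hw.differentiableAt one_ne_zero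

theorem ContDiffAt.contDiffAt_pds {m n : WithTop ℕ∞} (hg : ContDiffAt ℝ n g z) (hmn : m + 1 ≤ n) :
    ContDiffAt ℝ m (pds g) z :=
  ((hg.fderiv_right hmn).clm_apply contDiffAt_const).congr_of_eventuallyEq <|
    pds_eventuallyEq_fderiv (hg.eventually_differentiableAt (le_add_self.trans hmn))

theorem ContDiffAt.contDiffAt_pdt {m n : WithTop ℕ∞} (hg : ContDiffAt ℝ n g z) (hmn : m + 1 ≤ n) :
    ContDiffAt ℝ m (pdt g) z :=
  ((hg.fderiv_right hmn).clm_apply contDiffAt_const).congr_of_eventuallyEq <|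
    pdt_eventuallyEq_fderiv (hg.eventually_differentiableAt (le_add_self.trans hmn))

theorem ContDiffAt.differentiableAt_pds {n : WithTop ℕ∞} (hg : ContDiffAt ℝ n g z) (hn : 2 ≤ n) :
    DifferentiableAt ℝ (pds g) z :=
  (hg.contDiffAt_pds (m := 1) hn).differentiableAt one_ne_zero

theorem ContDiffAt.differentiableAt_pdt {n : WithTop ℕ∞} (hg : ContDiffAt ℝ n g z) (hn : 2 ≤ n) :
    DifferentiableAt ℝ (pdt g) z :=
  (hg.contDiffAt_pdt (m := 1) hn).differentiableAt one_ne_zero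

theorem pds_pdt_comm (hg : ContDiffAt ℝ 2 g z) : pds (pdt g) z = pdt (pds g) z := by
  have hdg := hg.eventually_differentiableAt one_le_two
  have hdf : DifferentiableAt ℝ (fderiv ℝ g) z :=
    (hg.fderiv_right (m := 1) le_rfl).differentiableAt one_ne_zero
  have hd : ∀ v, DifferentiableAt ℝ (fun w => fderiv ℝ g w v) z :=
    fun v => hdf.clm_apply (differentiableAt_const v)
  rw [(pdt_eventuallyEq_fderiv hdg).pds_eq, (pds_eventuallyEq_fderiv hdg).pdt_eq,
    pds_eq_fderiv (hd _), pdt_eq_fderiv (hd _), fderiv_clm_apply hdf (differentiableAt_const _),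
    fderiv_clm_apply hdf (differentiableAt_const _)]
  simpa using hg.isSymmSndFDerivAt (by simp) (1, 0) (0, 1)

theorem pdt_pds_eventuallyEq {n : WithTop ℕ∞} (hg : ContDiffAt ℝ n g z) (hn : 2 ≤ n) :
    pdt (pds g) =ᶠ[𝓝 z] pds (pdt g) :=
  ((hg.of_le hn).eventually (by simp)).mono fun _ hw => (pds_pdt_comm hw).symm

theorem pdt_pds_pds (hg : ContDiffAt ℝ 3 g z) : pdt (pds (pds g)) z = pds (pds (pdt g)) z := by
  rw [← pds_pdt_comm (hg.contDiffAt_pds le_rfl), (pdt_pds_eventuallyEq hg (by norm_num)).pds_eq]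

theorem pdt_pdt_pds (hg : ContDiffAt ℝ 3 g z) : pdt (pdt (pds g)) z = pds (pdt (pdt g)) z := by
  rw [(pdt_pds_eventuallyEq hg (by norm_num)).pdt_eq, pds_pdt_comm (hg.contDiffAt_pdt le_rfl)]

end PartialDerivatives

section DerivativeFormulas

variable {α n : ℝ} {P : ℝ × ℝ → ℝ} {z : ℝ × ℝ}

theorem pds_DP2 (hP : ContDiffAt ℝ 2 P z) (hs : z.1 ≠ 0) :
    pds (DP2 α P) z = 2 * α^2 * pds P z * pds (pds P) z
      + 2 * pdt P z * pds (pdt P) z / z.1^2 - 2 * (pdt P z)^2 / z.1^3 := by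
  have h := (((hasDerivAt_pds (hP.differentiableAt_pds le_rfl)).pow 2).const_mul (α^2)).add
    (((hasDerivAt_pds (hP.differentiableAt_pdt le_rfl)).pow 2).div (hasDerivAt_pow 2 z.1)
      (pow_ne_zero 2 hs))
  exact (h.congr_deriv (by simp only [Prod.mk.eta, Pi.pow_apply]; field_simp; ring)).deriv

theorem pdt_DP2 (hP : ContDiffAt ℝ 2 P z) :
    pdt (DP2 α P) z = 2 * α^2 * pds P z * pdt (pds P) z
      + 2 * pdt P z * pdt (pdt P) z / z.1^2 := by
  have h := (((hasDerivAt_pdt (hP.differentiableAt_pds le_rfl)).pow 2).const_mul (α^2)).add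
    (((hasDerivAt_pdt (hP.differentiableAt_pdt le_rfl)).pow 2).div_const (z.1^2))
  exact (h.congr_deriv (by ring)).deriv

theorem pds_pds_DP2 (hP : ContDiffAt ℝ 3 P z) (hs : z.1 ≠ 0) :
    pds (pds (DP2 α P)) z = 2 * α^2 * ((pds (pds P) z)^2 + pds P z * pds (pds (pds P)) z)
      + (2 * (pds (pdt P) z)^2 + 2 * pdt P z * pds (pds (pdt P)) z) / z.1^2
      - 8 * pdt P z * pds (pdt P) z / z.1^3 + 6 * (pdt P z)^2 / z.1^4 := by
  have hev : pds (DP2 α P) =ᶠ[𝓝 z] fun w => 2 * α^2 * pds P w * pds (pds P) w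
      + 2 * pdt P w * pds (pdt P) w / w.1^2 - 2 * (pdt P w)^2 / w.1^3 := by
    filter_upwards [hP.eventually (by simp), continuousAt_fst.eventually_ne hs] with w hw hws
    exact pds_DP2 (hw.of_le (by norm_num)) hws
  have hA := hasDerivAt_pds (hP.differentiableAt_pds (by norm_num))
  have hB := hasDerivAt_pds (hP.differentiableAt_pdt (by norm_num))
  have hAA := hasDerivAt_pds ((hP.contDiffAt_pds (m := 2) le_rfl).differentiableAt_pds le_rfl)
  have hBA := hasDerivAt_pds ((hP.contDiffAt_pdt (m := 2) le_rfl).differentiableAt_pds le_rfl)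
  have h := (((hA.const_mul (2 * α^2)).mul hAA).add
      (((hB.const_mul 2).mul hBA).div (hasDerivAt_pow 2 z.1) (pow_ne_zero 2 hs))).sub
      (((hB.pow 2).const_mul 2).div (hasDerivAt_pow 3 z.1) (pow_ne_zero 3 hs))
  rw [hev.pds_eq]
  exact (h.congr_deriv <| by
    simp only [Prod.mk.eta, Pi.pow_apply, Pi.mul_apply]; field_simp; ring).deriv

theorem pdt_pdt_DP2 (hP : ContDiffAt ℝ 3 P z) :
    pdt (pdt (DP2 α P)) z = 2 * α^2 * ((pdt (pds P) z)^2 + pds P z * pdt (pdt (pds P)) z)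
      + (2 * (pdt (pdt P) z)^2 + 2 * pdt P z * pdt (pdt (pdt P)) z) / z.1^2 := by
  have hev : pdt (DP2 α P) =ᶠ[𝓝 z] fun w => 2 * α^2 * pds P w * pdt (pds P) w
      + 2 * pdt P w * pdt (pdt P) w / w.1^2 := by
    filter_upwards [hP.eventually (by simp)] with w hw
    exact pdt_DP2 (hw.of_le (by norm_num))
  have hA := hasDerivAt_pdt (hP.differentiableAt_pds (by norm_num))
  have hB := hasDerivAt_pdt (hP.differentiableAt_pdt (by norm_num))
  have hAB := hasDerivAt_pdt ((hP.contDiffAt_pds (m := 2) le_rfl).differentiableAt_pdt le_rfl)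
  have hBB := hasDerivAt_pdt ((hP.contDiffAt_pdt (m := 2) le_rfl).differentiableAt_pdt le_rfl)
  have h := ((hA.const_mul (2 * α^2)).mul hAB).add (((hB.const_mul 2).mul hBB).div_const (z.1^2))
  rw [hev.pdt_eq]
  exact (h.congr_deriv (by ring)).deriv

theorem pds_L2 (hP : ContDiffAt ℝ 3 P z) (hs : z.1 ≠ 0) :
    pds (L2 α n P) z = α^2 * (pds (pds (pds P)) z
        + (n - 1) * (pds (pds P) z / z.1 - pds P z / z.1^2))
      + pds (pdt (pdt P)) z / z.1^2 - 2 * pdt (pdt P) z / z.1^3 := by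
  have hA := hasDerivAt_pds (hP.differentiableAt_pds (by norm_num))
  have hAA := hasDerivAt_pds ((hP.contDiffAt_pds (m := 2) le_rfl).differentiableAt_pds le_rfl)
  have hBB := hasDerivAt_pds ((hP.contDiffAt_pdt (m := 2) le_rfl).differentiableAt_pdt le_rfl)
  have h := ((hAA.add ((hA.const_mul (n - 1)).div (hasDerivAt_id' z.1) hs)).const_mul (α^2)).add
    (hBB.div (hasDerivAt_pow 2 z.1) (pow_ne_zero 2 hs))
  exact (h.congr_deriv (by field_simp; ring)).deriv

theorem pdt_L2 (hP : ContDiffAt ℝ 3 P z) :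
    pdt (L2 α n P) z = α^2 * (pdt (pds (pds P)) z + (n - 1) * pdt (pds P) z / z.1)
      + pdt (pdt (pdt P)) z / z.1^2 := by
  have hA := hasDerivAt_pdt (hP.differentiableAt_pds (by norm_num))
  have hAA := hasDerivAt_pdt ((hP.contDiffAt_pds (m := 2) le_rfl).differentiableAt_pds le_rfl)
  have hBB := hasDerivAt_pdt ((hP.contDiffAt_pdt (m := 2) le_rfl).differentiableAt_pdt le_rfl)
  have h := ((hAA.add ((hA.const_mul (n - 1)).div_const z.1)).const_mul (α^2)).add
    (hBB.div_const (z.1^2))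
  exact (h.congr_deriv (by ring)).deriv

theorem R2_eq_of_contDiffAt (hn : n ≠ 0) (hn1 : n ≠ 1) (hα : α ≠ 0) (hP : ContDiffAt ℝ 3 P z)
    (hs : z.1 ≠ 0) :
    R2 α n P z = α^4 * (1 - 1/n) *
          (pds (pds P) z - pds P z / z.1 - pdt (pdt P) z / (α^2 * (n-1) * z.1^2))^2
        + (2*α^2 / z.1^2) * (pds (pdt P) z - pdt P z / z.1)^2
        + (((n-2)/(n-1)) * (pdt (pdt P) z)^2 - (n-2) * α^2 * (pdt P z)^2) / z.1^4 := by
  have hn1' : n - 1 ≠ 0 := sub_ne_zero.mpr hn1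
  rw [R2, pds_L2 hP hs, pdt_L2 hP]
  simp only [L2]
  rw [pds_pds_DP2 hP hs, pds_DP2 (hP.of_le (by norm_num)) hs, pdt_pdt_DP2 hP, pdt_pds_pds hP,
    pdt_pdt_pds hP, ← pds_pdt_comm (hP.of_le (by norm_num))]
  field_simp
  ring

end DerivativeFormulas

/-- Pointwise decomposition of `R[P]` in the two-dimensional
case, into a sum of two squares plus the angular remainder `k[P]/s⁴`. -/
theorem R2_decomposition
    (n α : ℝ) (hn : 2 < n) (hα : 0 < α)
    (P : ℝ × ℝ → ℝ) (hP : ContDiffOn ℝ 3 P (Set.Ioi (0:ℝ) ×ˢ Set.univ)) :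
    ∀ z ∈ Set.Ioi (0:ℝ) ×ˢ (Set.univ : Set ℝ),
      R2 α n P z =
        α^4 * (1 - 1/n) *
          (pds (pds P) z - pds P z / z.1 - pdt (pdt P) z / (α^2 * (n-1) * z.1^2))^2
        + (2*α^2 / z.1^2) * (pds (pdt P) z - pdt P z / z.1)^2
        + (((n-2)/(n-1)) * (pdt (pdt P) z)^2 - (n-2) * α^2 * (pdt P z)^2) / z.1^4 := by
  intro z hz
  exact R2_eq_of_contDiffAt (by linarith) (by linarith) hα.ne'
    (hP.contDiffAt ((isOpen_Ioi.prod isOpen_univ).mem_nhds hz)) hz.1.ne'
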